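/- Let P_{3k+1} (k ≥ 1) have vertices labeled 1,…,3k+1 along the path, and write v = 3q + r with 0 ≤ r < 3. Then DV(v) = q(q+3)/2 if r = 0; DV(v) = (q+1)(k−q+1) if r = 1; and DV(v) = (k−q)(k−q+3)/2 if r = 2. -/

import Mathlib

/-!
With vertices indexed from `0`, the closed neighbourhoods `{3i-1, 3i, 3i+1}` of the vertices `3i`,
`0 ≤ i ≤ k`, are disjoint blocks covering the path, so a dominating set has at least `k + 1`
vertices and a minimum one meets every block exactly once. Dominating the two vertices between
consecutive blocks forces the offsets `+1, 0, -1` of the representatives to be non-increasing, so a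
minimum dominating set is determined by two cut points `a ≤ b`: blocks `i < a` use `3i+1`, blocks
`a ≤ i < b` use `3i`, the others `3i-1`. Counting the cut pairs whose set contains `v` gives a
product when `r = 1` and a triangular number when `r = 0`; reversing the path turns `r = 2`
into `r = 0`.
-/

def IsDomSet {V : Type*} (G : SimpleGraph V) (D : Finset V) : Prop :=
  ∀ v, v ∉ D → ∃ u ∈ D, G.Adj u v

/-- The domination number `γ(G)`. -/
noncomputable def domNum {V : Type*} (G : SimpleGraph V) : ℕ :=
  sInf {n | ∃ D : Finset V, IsDomSet G D ∧ D.card = n}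

def minDomSets {V : Type*} (G : SimpleGraph V) : Set (Finset V) :=
  {D | IsDomSet G D ∧ D.card = domNum G}

/-- `τ(G)` in the paper. -/
noncomputable def tau {V : Type*} (G : SimpleGraph V) : ℕ :=
  (minDomSets G).ncard

/-- `DV(v)` in the paper. -/
noncomputable def DV {V : Type*} (G : SimpleGraph V) (v : V) : ℕ :=
  {D ∈ minDomSets G | v ∈ D}.ncard

open Finset
open SimpleGraph (pathGraph pathGraph_adj)

section Iso

variable {V W : Type*} {G : SimpleGraph V} {G' : SimpleGraph W}

theorem IsDomSet.map (e : G ≃g G') {D : Finset V} (hD : IsDomSet G D) :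
    IsDomSet G' (D.map e.toEquiv.toEmbedding) := by
  intro w hw
  obtain ⟨v, rfl⟩ := e.surjective w
  obtain ⟨u, hu, hadj⟩ := hD v fun h => hw (mem_map_of_mem _ h)
  exact ⟨e u, mem_map_of_mem _ hu, e.map_adj_iff.2 hadj⟩

theorem SimpleGraph.Iso.domNum_eq (e : G ≃g G') : domNum G = domNum G' := by
  unfold domNum
  congr 1
  ext n
  constructor <;> rintro ⟨D, hD, rfl⟩
  exacts [⟨_, hD.map e, Finset.card_map _⟩, ⟨_, hD.map e.symm, Finset.card_map _⟩]

theorem SimpleGraph.Iso.map_mem_minDomSets (e : G ≃g G') {D : Finset V}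
    (hD : D ∈ minDomSets G) : D.map e.toEquiv.toEmbedding ∈ minDomSets G' :=
  ⟨hD.1.map e, by rw [Finset.card_map, hD.2, e.domNum_eq]⟩

theorem SimpleGraph.Iso.dv_apply (e : G ≃g G') (v : V) : DV G' (e v) = DV G v := by
  have himage : {D' ∈ minDomSets G' | e v ∈ D'} =
      Finset.map e.toEquiv.toEmbedding '' {D ∈ minDomSets G | v ∈ D} := by
    ext D'
    constructor
    · rintro ⟨hD', hv⟩
      refine ⟨D'.map e.symm.toEquiv.toEmbedding, ⟨e.symm.map_mem_minDomSets hD', ?_⟩, ?_⟩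
      · simpa using mem_map_of_mem e.symm.toEquiv.toEmbedding hv
      · exact e.toEquiv.finsetCongr.apply_symm_apply D'
    · rintro ⟨D, ⟨hD, hv⟩, rfl⟩
      exact ⟨e.map_mem_minDomSets hD, mem_map_of_mem _ hv⟩
  rw [DV, DV, himage, Set.ncard_image_of_injective _ (Finset.map_injective _)]

end Iso

def SimpleGraph.pathGraphRevIso (n : ℕ) : pathGraph n ≃g pathGraph n where
  toEquiv := Fin.revPerm
  map_rel_iff' {u v} := by
    simp only [Fin.revPerm_apply, pathGraph_adj, Fin.val_rev]
    omega

def IsPathDomSet (n : ℕ) (S : Finset ℕ) : Prop :=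
  ∀ x < n, x ∉ S → ∃ y ∈ S, y + 1 = x ∨ x + 1 = y

theorem isDomSet_pathGraph_iff {n : ℕ} {D : Finset (Fin n)} :
    IsDomSet (pathGraph n) D ↔ IsPathDomSet n (D.map Fin.valEmbedding) := by
  constructor
  · intro hD x hx hxD
    obtain ⟨u, hu, hadj⟩ := hD ⟨x, hx⟩ fun h => hxD (mem_map_of_mem Fin.valEmbedding h)
    exact ⟨u, mem_map_of_mem _ hu, pathGraph_adj.1 hadj⟩
  · intro hS x hx
    obtain ⟨y, hy, hxy⟩ := hS x x.isLt fun h => hx ((mem_map' Fin.valEmbedding).1 h)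
    obtain ⟨u, hu, rfl⟩ := mem_map.1 hy
    exact ⟨u, hu, pathGraph_adj.2 hxy⟩

namespace IsPathDomSet

variable {k : ℕ} {S : Finset ℕ}

theorem range_subset_image_div (hS : IsPathDomSet (3 * k + 1) S) :
    range (k + 1) ⊆ S.image fun x => (x + 1) / 3 := by
  intro i hi
  rw [mem_range] at hi
  rw [mem_image]
  by_cases h : 3 * i ∈ S
  · exact ⟨3 * i, h, by omega⟩
  · obtain ⟨y, hy, hyi⟩ := hS (3 * i) (by omega) h
    exact ⟨y, hy, by omega⟩

theorem le_card (hS : IsPathDomSet (3 * k + 1) S) : k + 1 ≤ #S := by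
  simpa using (card_le_card hS.range_subset_image_div).trans card_image_le

theorem injOn_div_of_card_le (hS : IsPathDomSet (3 * k + 1) S) (hcard : #S ≤ k + 1) :
    Set.InjOn (fun x => (x + 1) / 3) S :=
  card_image_iff.1 <| le_antisymm card_image_le <|
    hcard.trans (by simpa using card_le_card hS.range_subset_image_div)

end IsPathDomSet

theorem exists_forall_iff_lt {P : ℕ → Prop} (hP : ∀ i, P (i + 1) → P i) {N : ℕ} (hN : ¬P N) :
    ∃ a ≤ N, ∀ i, P i ↔ i < a := by
  have hlow : IsLowerSet {i | P i} := fun i j hji hi => antitone_nat_of_succ_le (f := P) hP hji hi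
  obtain h | ⟨a, ha⟩ := hlow.eq_univ_or_Iio
  · exact absurd (h.symm ▸ Set.mem_univ N : N ∈ {i | P i}) hN
  · refine ⟨a, not_lt.1 fun hNa => hN ?_, fun i => Set.ext_iff.1 ha i⟩
    exact (Set.ext_iff.1 ha N).2 hNa

/-- With `0`-indexed vertices, the block `{3i-1, 3i, 3i+1}` is represented by `3i+1` when `i < a`,
by `3i` when `a ≤ i < b`, and by `3i-1` when `b ≤ i`. -/
def IsBlockRep (a b x : ℕ) : Prop :=
  x % 3 = 1 ∧ x / 3 < a ∨ x % 3 = 0 ∧ a ≤ x / 3 ∧ x / 3 < b ∨ x % 3 = 2 ∧ b ≤ x / 3 + 1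

instance (a b : ℕ) : DecidablePred (IsBlockRep a b) := fun _ => by
  unfold IsBlockRep; infer_instance

/-- `0 < b` and `a ≤ k` keep the representatives of the end blocks inside the path;
`b ≤ k + 1` makes the pair unique. -/
def admissibleCuts (k : ℕ) : Finset (ℕ × ℕ) :=
  {p ∈ range (k + 1) ×ˢ range (k + 2) | p.1 ≤ p.2 ∧ 0 < p.2}

theorem mem_admissibleCuts {k : ℕ} {p : ℕ × ℕ} :
    p ∈ admissibleCuts k ↔ p.1 ≤ k ∧ p.2 ≤ k + 1 ∧ p.1 ≤ p.2 ∧ 0 < p.2 := by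
  simp only [admissibleCuts, mem_filter, mem_product, mem_range]
  omega

def blockDomSet (k a b : ℕ) : Finset (Fin (3 * k + 1)) :=
  {x | IsBlockRep a b x}

section BlockRep

variable {a b : ℕ}

@[simp] theorem isBlockRep_three_mul (i : ℕ) : IsBlockRep a b (3 * i) ↔ a ≤ i ∧ i < b := by
  unfold IsBlockRep; omega

@[simp] theorem isBlockRep_three_mul_add_one (i : ℕ) : IsBlockRep a b (3 * i + 1) ↔ i < a := by
  unfold IsBlockRep; omega

@[simp] theorem isBlockRep_three_mul_add_two (i : ℕ) : IsBlockRep a b (3 * i + 2) ↔ b ≤ i + 1 := by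
  unfold IsBlockRep; omega

end BlockRep

section Structure

variable {k : ℕ} {S : Finset ℕ}

theorem mem_iff_isBlockRep (hlt : ∀ x ∈ S, x < 3 * k + 1) (hS : IsPathDomSet (3 * k + 1) S)
    (hinj : ∀ x ∈ S, ∀ y ∈ S, (x + 1) / 3 = (y + 1) / 3 → x = y) {a b : ℕ}
    (ha : ∀ i, 3 * i + 1 ∈ S ↔ i < a) (hb : ∀ i, 3 * i ∈ S ∨ 3 * i + 1 ∈ S ↔ i < b) (x : ℕ) :
    x ∈ S ↔ x < 3 * k + 1 ∧ IsBlockRep a b x := by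
  obtain ⟨i, rfl | rfl | rfl⟩ : ∃ i, x = 3 * i ∨ x = 3 * i + 1 ∨ x = 3 * i + 2 := ⟨x / 3, by omega⟩
  · rw [isBlockRep_three_mul, ← not_lt, ← ha i, ← hb i]
    have h1 : 3 * i ∈ S → 3 * i + 1 ∉ S := fun h h' => by have := hinj _ h _ h' (by omega); omega
    have := hlt (3 * i)
    tauto
  · rw [isBlockRep_three_mul_add_one, ← ha i]
    exact ⟨fun h => ⟨hlt _ h, h⟩, And.right⟩
  · rw [isBlockRep_three_mul_add_two, ← not_lt, ← hb (i + 1), show 3 * (i + 1) = 3 * i + 3 by ring]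
    constructor
    · intro h
      refine ⟨hlt _ h, ?_⟩
      rintro (h' | h') <;> have := hinj _ h _ h' (by omega) <;> omega
    · rintro ⟨hx, hn⟩
      obtain ⟨y, hy, hyx⟩ := hS (3 * i + 3) (by omega) fun h => hn (.inl h)
      obtain rfl | rfl : y = 3 * i + 2 ∨ y = 3 * i + 3 + 1 := by omega
      exacts [hy, absurd (.inr hy) hn]

theorem exists_admissibleCuts (hlt : ∀ x ∈ S, x < 3 * k + 1) (hS : IsPathDomSet (3 * k + 1) S)
    (hinj : ∀ x ∈ S, ∀ y ∈ S, (x + 1) / 3 = (y + 1) / 3 → x = y) :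
    ∃ p ∈ admissibleCuts k, ∀ x, x ∈ S ↔ x < 3 * k + 1 ∧ IsBlockRep p.1 p.2 x := by
  have hA : ∀ i, 3 * (i + 1) + 1 ∈ S → 3 * i + 1 ∈ S := by
    intro i h
    by_contra hn
    have h2 : 3 * i + 2 ∉ S := fun h' => by have := hinj _ h _ h' (by omega); omega
    obtain ⟨y, hy, hyx⟩ := hS (3 * i + 2) (by have := hlt _ h; omega) h2
    obtain rfl | rfl : y = 3 * i + 1 ∨ y = 3 * i + 3 := by omega
    · exact hn hy
    · have := hinj _ h _ hy (by omega); omega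
  have hB : ∀ i, 3 * (i + 1) ∈ S ∨ 3 * (i + 1) + 1 ∈ S → 3 * i ∈ S ∨ 3 * i + 1 ∈ S := by
    intro i h
    by_contra hn
    obtain ⟨hn0, hn1⟩ := not_or.1 hn
    have hi : 3 * i + 1 < 3 * k + 1 := by rcases h with h | h <;> have := hlt _ h <;> omega
    obtain ⟨y, hy, hyx⟩ := hS (3 * i + 1) hi hn1
    obtain rfl | rfl : y = 3 * i ∨ y = 3 * i + 2 := by omega
    · exact hn0 hy
    · rcases h with h | h <;> have := hinj _ h _ hy (by omega) <;> omega
  obtain ⟨a, hak, ha⟩ := exists_forall_iff_lt (P := fun i => 3 * i + 1 ∈ S) hA (N := k)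
    fun h => by have := hlt _ h; omega
  obtain ⟨b, hbk, hb⟩ := exists_forall_iff_lt (P := fun i => 3 * i ∈ S ∨ 3 * i + 1 ∈ S) hB
    (N := k + 1) fun h => by rcases h with h | h <;> have := hlt _ h <;> omega
  have hb0 : 0 < b := (hb 0).1 <| by
    by_cases h0 : 3 * 0 ∈ S
    · exact .inl h0
    · obtain ⟨y, hy, hy1⟩ := hS _ (by omega) h0
      obtain rfl : y = 3 * 0 + 1 := by omega
      exact .inr hy
  have hab : a ≤ b := not_lt.1 fun hba => lt_irrefl b ((hb b).1 (.inr ((ha b).2 hba)))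
  exact ⟨(a, b), mem_admissibleCuts.2 ⟨hak, hbk, hab, hb0⟩, mem_iff_isBlockRep hlt hS hinj ha hb⟩

end Structure

section PathGraph

variable {k : ℕ}

@[simp] theorem mem_blockDomSet {a b : ℕ} {x : Fin (3 * k + 1)} :
    x ∈ blockDomSet k a b ↔ IsBlockRep a b x := by
  simp [blockDomSet]

theorem IsDomSet.succ_le_card_of_pathGraph {D : Finset (Fin (3 * k + 1))}
    (hD : IsDomSet (pathGraph (3 * k + 1)) D) : k + 1 ≤ #D := by
  simpa using (isDomSet_pathGraph_iff.1 hD).le_card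

theorem isDomSet_blockDomSet {a b : ℕ} (h : (a, b) ∈ admissibleCuts k) :
    IsDomSet (pathGraph (3 * k + 1)) (blockDomSet k a b) := by
  rw [mem_admissibleCuts] at h
  intro x hx
  rw [mem_blockDomSet] at hx
  by_cases hr : x.val + 1 < 3 * k + 1 ∧ IsBlockRep a b (x.val + 1)
  · exact ⟨⟨x + 1, hr.1⟩, mem_blockDomSet.2 hr.2, pathGraph_adj.2 (.inr rfl)⟩
  · unfold IsBlockRep at hx hr
    refine ⟨⟨x - 1, by omega⟩, mem_blockDomSet.2 ?_, pathGraph_adj.2 (.inl ?_)⟩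
    · unfold IsBlockRep; dsimp only; omega
    · dsimp only; omega

theorem card_blockDomSet {a b : ℕ} (h : (a, b) ∈ admissibleCuts k) :
    #(blockDomSet k a b) = k + 1 := by
  refine le_antisymm ?_ (isDomSet_blockDomSet h).succ_le_card_of_pathGraph
  have hinj : Set.InjOn (fun x : Fin (3 * k + 1) => (x.val + 1) / 3) (blockDomSet k a b) := by
    intro x hx y hy hxy
    rw [mem_coe, mem_blockDomSet] at hx hy
    unfold IsBlockRep at hx hy
    dsimp only at hxy
    rw [mem_admissibleCuts] at h
    ext; omega
  simpa using card_le_card_of_injOn _ (fun x _ => by simp; omega) hinj (t := range (k + 1))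

theorem blockDomSet_injOn :
    Set.InjOn (fun p : ℕ × ℕ => blockDomSet k p.1 p.2) (admissibleCuts k) := by
  rintro ⟨a, b⟩ h ⟨a', b'⟩ h' he
  rw [mem_coe, mem_admissibleCuts] at h h'
  have key (x : Fin (3 * k + 1)) : IsBlockRep a b x ↔ IsBlockRep a' b' x := by
    simpa using Finset.ext_iff.1 he x
  have ha : a = a' := by
    by_contra hne
    have := key ⟨3 * min a a' + 1, by omega⟩
    simp only [isBlockRep_three_mul_add_one] at this
    omega
  have hb : b = b' := by
    by_contra hne
    have := key ⟨3 * (min b b' - 1) + 2, by omega⟩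
    simp only [isBlockRep_three_mul_add_two] at this
    omega
  rw [ha, hb]

theorem domNum_pathGraph : domNum (pathGraph (3 * k + 1)) = k + 1 := by
  have h : (0, 1) ∈ admissibleCuts k := mem_admissibleCuts.2 (by omega)
  have hmem : k + 1 ∈ {n | ∃ D, IsDomSet (pathGraph (3 * k + 1)) D ∧ #D = n} :=
    ⟨_, isDomSet_blockDomSet h, card_blockDomSet h⟩
  refine le_antisymm (Nat.sInf_le hmem) (le_csInf ⟨_, hmem⟩ ?_)
  rintro n ⟨D, hD, rfl⟩
  exact hD.succ_le_card_of_pathGraph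

theorem mem_minDomSets_pathGraph {D : Finset (Fin (3 * k + 1))} :
    D ∈ minDomSets (pathGraph (3 * k + 1)) ↔ ∃ p ∈ admissibleCuts k, blockDomSet k p.1 p.2 = D := by
  rw [minDomSets, Set.mem_ofPred_eq, domNum_pathGraph]
  constructor
  · rintro ⟨hD, hcard⟩
    have hS := isDomSet_pathGraph_iff.1 hD
    have hlt : ∀ x ∈ D.map Fin.valEmbedding, x < 3 * k + 1 := fun x hx => by
      obtain ⟨y, -, rfl⟩ := mem_map.1 hx
      exact y.isLt
    obtain ⟨p, hp, hmem⟩ := exists_admissibleCuts hlt hS (hS.injOn_div_of_card_le (by simp [hcard]))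
    refine ⟨p, hp, ?_⟩
    ext x
    rw [mem_blockDomSet, ← mem_map' Fin.valEmbedding, hmem]
    exact ⟨fun h => ⟨x.isLt, h⟩, And.right⟩
  · rintro ⟨p, hp, rfl⟩
    exact ⟨isDomSet_blockDomSet hp, card_blockDomSet hp⟩

theorem dv_pathGraph (v : Fin (3 * k + 1)) :
    DV (pathGraph (3 * k + 1)) v = #{p ∈ admissibleCuts k | IsBlockRep p.1 p.2 v} := by
  have himage : {D ∈ minDomSets (pathGraph (3 * k + 1)) | v ∈ D} =
      ({p ∈ admissibleCuts k | IsBlockRep p.1 p.2 v}.image fun p => blockDomSet k p.1 p.2) := by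
    ext D
    simp only [Set.mem_ofPred_eq, mem_minDomSets_pathGraph, coe_image, coe_filter, Set.mem_image]
    constructor
    · rintro ⟨⟨p, hp, rfl⟩, hv⟩
      exact ⟨p, ⟨hp, mem_blockDomSet.1 hv⟩, rfl⟩
    · rintro ⟨p, ⟨hp, hv⟩, rfl⟩
      exact ⟨⟨p, hp, rfl⟩, mem_blockDomSet.2 hv⟩
  rw [DV, himage, Set.ncard_coe_finset,
    card_image_of_injOn (blockDomSet_injOn.mono (coe_subset.2 (filter_subset _ _)))]

end PathGraph

theorem card_admissibleCuts_filter_snd_le {k q : ℕ} (hq : q ≤ k) :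
    #{p ∈ admissibleCuts k | p.2 ≤ q} = q * (q + 3) / 2 := by
  have hpairs := card_product_filter_lt (s := range (q + 2))
  -- `(a, b) ↦ (a, b + 1)`: these are the pairs `x < y < q + 2` other than `(0, 1)`
  have hshift : #{p ∈ admissibleCuts k | p.2 ≤ q} =
      #({x ∈ range (q + 2) ×ˢ range (q + 2) | x.1 < x.2}.erase (0, 1)) := by
    apply card_nbij' (fun p => (p.1, p.2 + 1)) (fun p => (p.1, p.2 - 1)) <;> intro p <;>
      simp [mem_admissibleCuts, Prod.ext_iff] <;> omega
  rw [card_erase_of_mem (by simp)] at hshift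
  rw [card_range, Nat.choose_two_right] at hpairs
  have : (q + 2) * (q + 2 - 1) = q * (q + 3) + 2 := by
    rw [show q + 2 - 1 = q + 1 by omega]; ring
  omega

theorem card_admissibleCuts_filter_fst_le_lt {k q : ℕ} (hq : q ≤ k) :
    #{p ∈ admissibleCuts k | p.1 ≤ q ∧ q < p.2} = (q + 1) * (k - q + 1) := by
  have : {p ∈ admissibleCuts k | p.1 ≤ q ∧ q < p.2} = range (q + 1) ×ˢ Ioc q (k + 1) := by
    ext p
    simp only [mem_filter, mem_admissibleCuts, mem_product, mem_range, mem_Ioc]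
    omega
  rw [this, card_product, card_range, Nat.card_Ioc]
  congr 1
  omega

section Counting

variable {k q : ℕ} {v : Fin (3 * k + 1)}

theorem dv_pathGraph_of_val_add_one_eq (hv : v.val + 1 = 3 * q) :
    DV (pathGraph (3 * k + 1)) v = q * (q + 3) / 2 := by
  rw [dv_pathGraph, ← card_admissibleCuts_filter_snd_le (show q ≤ k by omega)]
  congr 1
  refine filter_congr fun p _ => ?_
  rw [show v.val = 3 * (q - 1) + 2 by omega, isBlockRep_three_mul_add_two]
  omega

theorem dv_pathGraph_of_val_eq (hv : v.val = 3 * q) :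
    DV (pathGraph (3 * k + 1)) v = (q + 1) * (k - q + 1) := by
  rw [dv_pathGraph, ← card_admissibleCuts_filter_fst_le_lt (show q ≤ k by omega)]
  congr 1
  exact filter_congr fun p _ => by rw [hv, isBlockRep_three_mul]

theorem dv_pathGraph_of_val_eq_add_one (hv : v.val = 3 * q + 1) :
    DV (pathGraph (3 * k + 1)) v = (k - q) * (k - q + 3) / 2 := by
  rw [← (SimpleGraph.pathGraphRevIso (3 * k + 1)).dv_apply v]
  exact dv_pathGraph_of_val_add_one_eq (by simp [SimpleGraph.pathGraphRevIso]; omega)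

end Counting

/-- Vertex `v : Fin (3*k+1)` carries the label `v.val + 1` in the numbering `1, …, 3k+1`. -/
theorem stmt_18_general (k : ℕ) (v : Fin (3 * k + 1)) (q r : ℕ)
    (hq : v.val + 1 = 3 * q + r) :
    (r = 0 → DV (SimpleGraph.pathGraph (3 * k + 1)) v = q * (q + 3) / 2) ∧
    (r = 1 → DV (SimpleGraph.pathGraph (3 * k + 1)) v = (q + 1) * (k - q + 1)) ∧
    (r = 2 → DV (SimpleGraph.pathGraph (3 * k + 1)) v = (k - q) * (k - q + 3) / 2) :=
  ⟨fun _ => dv_pathGraph_of_val_add_one_eq (by omega), fun _ => dv_pathGraph_of_val_eq (by omega),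
    fun _ => dv_pathGraph_of_val_eq_add_one (by omega)⟩

/-- Vertices of `SimpleGraph.pathGraph (3*k+1)` are labeled `1,…,3k+1`; vertex
`v : Fin (3*k+1)` has label `v.val + 1 = 3*q + r` with `0 ≤ r < 3`. -/
theorem stmt_18 (k : ℕ) (hk : 1 ≤ k) (v : Fin (3 * k + 1)) (q r : ℕ)
    (hq : v.val + 1 = 3 * q + r) (hr : r < 3) :
    (r = 0 → DV (SimpleGraph.pathGraph (3 * k + 1)) v = q * (q + 3) / 2) ∧
    (r = 1 → DV (SimpleGraph.pathGraph (3 * k + 1)) v = (q + 1) * (k - q + 1)) ∧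
    (r = 2 → DV (SimpleGraph.pathGraph (3 * k + 1)) v = (k - q) * (k - q + 3) / 2) :=
  stmt_18_general k v q r hq
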